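/- arXiv:2308.06059 — 3 statements merged into one kernel-verified Lean document; each statement's English description precedes it below -/
import Mathlib

section
/- Let n ≥ 1 be an integer and let ω > 0 be a real number with ω ∉ {1,2,…,n}. Then for every z ∈ ℂ with z ≠ 0, S_n^{−ω}(z) = (−1)^n · ((ω)_n/(1−ω)_n) · z^n · S_n^{ω−1}(1/z). -/
/-!
Compare coefficients. With `n = ℓ + m`, the coefficient of `z ^ m` on the left is
`C(n, ℓ) (ω)_ℓ / (ω - n)_ℓ`, and on the right it is `(-1)^n (ω)_n / (1 - ω)_n` times
`C(n, m) (1 - ω)_m / (1 - ω - n)_m`. The reflection `(-x)_k = (-1)^k (x - k + 1)_k` and the splitting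
`(x)_{ℓ+m} = (x)_ℓ (x + ℓ)_m` bring both to `(-1)^ℓ C(n, ℓ) (ω)_ℓ / (1 - ω + m)_ℓ`; the conditions on
`ω` keep `(1 - ω)_n` and `(ω + ℓ)_m` away from zero.
-/

open Finset Polynomial

/-- The monic skyburst polynomial
`S_n^ω(z) = Σ_{ℓ=0}^n binom(n,ℓ) · (−ω)_ℓ/(−n−ω)_ℓ · z^{n−ℓ}`,
where `(a)_ℓ` is the Pochhammer (rising factorial) symbol. -/
noncomputable def skyburst (n : ℕ) (ω : ℝ) (z : ℂ) : ℂ :=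
  ∑ ℓ ∈ Finset.range (n + 1),
    (n.choose ℓ : ℂ) *
      ((ascPochhammer ℂ ℓ).eval (-(ω : ℂ)) / (ascPochhammer ℂ ℓ).eval (-(n : ℂ) - (ω : ℂ))) *
      z ^ (n - ℓ)

theorem ascPochhammer_eval_add {R : Type*} [CommSemiring R] (x : R) (m k : ℕ) :
    (ascPochhammer R (m + k)).eval x =
      (ascPochhammer R m).eval x * (ascPochhammer R k).eval (x + m) := by
  rw [← ascPochhammer_mul, eval_mul, eval_comp, eval_add, eval_X, eval_natCast]

theorem ascPochhammer_eval_neg_eq_neg_one_pow_mul {R : Type*} [CommRing R] (x : R) (k : ℕ) :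
    (ascPochhammer R k).eval (-x) = (-1) ^ k * (ascPochhammer R k).eval (x - k + 1) := by
  rw [ascPochhammer_eval_neg_eq_descPochhammer, descPochhammer_eval_eq_ascPochhammer]

noncomputable def skyburstCoeff {K : Type*} [Field K] (n : ℕ) (a : K) (ℓ : ℕ) : K :=
  n.choose ℓ * ((ascPochhammer K ℓ).eval (-a) / (ascPochhammer K ℓ).eval (-(n : K) - a))

theorem skyburst_eq_sum_antidiagonal (n : ℕ) (ω : ℝ) (z : ℂ) :
    skyburst n ω z = ∑ p ∈ antidiagonal n, skyburstCoeff n (ω : ℂ) p.1 * z ^ p.2 := by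
  rw [Nat.sum_antidiagonal_eq_sum_range_succ_mk]
  simp only [skyburst, skyburstCoeff, mul_assoc]

theorem skyburstCoeff_neg {K : Type*} [Field K] (w : K) (ℓ m : ℕ)
    (h₁ : (ascPochhammer K (ℓ + m)).eval (1 - w) ≠ 0)
    (h₂ : (ascPochhammer K m).eval (w + ℓ) ≠ 0) :
    skyburstCoeff (ℓ + m) (-w) ℓ =
      (-1) ^ (ℓ + m) *
        ((ascPochhammer K (ℓ + m)).eval w / (ascPochhammer K (ℓ + m)).eval (1 - w)) *
        skyburstCoeff (ℓ + m) (w - 1) m := by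
  have reflect_ℓ : (ascPochhammer K ℓ).eval (-((ℓ + m : ℕ) : K) - -w) =
      (-1) ^ ℓ * (ascPochhammer K ℓ).eval (1 - w + m) := by
    rw [show -((ℓ + m : ℕ) : K) - -w = -(ℓ + m - w) by push_cast; ring,
      ascPochhammer_eval_neg_eq_neg_one_pow_mul]
    congr 2; ring
  have reflect_m : (ascPochhammer K m).eval (-((ℓ + m : ℕ) : K) - (w - 1)) =
      (-1) ^ m * (ascPochhammer K m).eval (w + ℓ) := by
    rw [show -((ℓ + m : ℕ) : K) - (w - 1) = -(w + ℓ + m - 1) by push_cast; ring,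
      ascPochhammer_eval_neg_eq_neg_one_pow_mul]
    congr 2; ring
  have hsplit : (ascPochhammer K (ℓ + m)).eval (1 - w) =
      (ascPochhammer K m).eval (1 - w) * (ascPochhammer K ℓ).eval (1 - w + m) := by
    rw [add_comm, ascPochhammer_eval_add]
  obtain ⟨h₁m, h₁ℓ⟩ := mul_ne_zero_iff.mp (hsplit ▸ h₁)
  have sign : (-1 : K) ^ ℓ * (-1) ^ ℓ = 1 := by
    rw [← mul_pow, neg_one_mul, neg_neg, one_pow]
  rw [hsplit, ascPochhammer_eval_add]
  simp only [skyburstCoeff, reflect_ℓ, reflect_m, neg_neg, neg_sub]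
  field_simp
  rw [Nat.choose_symm_add, pow_add]
  linear_combination (-((ℓ + m).choose m : K) * (ascPochhammer K ℓ).eval w * (-1) ^ m) * sign

theorem skyburst_negative_parameter_general (n : ℕ) (ω : ℝ) (hω : 0 < ω)
    (hω' : ∀ k : ℕ, 1 ≤ k → k ≤ n → ω ≠ k) (z : ℂ) (hz : z ≠ 0) :
    skyburst n (-ω) z =
      (-1 : ℂ) ^ n *
        ((ascPochhammer ℂ n).eval (ω : ℂ) / (ascPochhammer ℂ n).eval (1 - (ω : ℂ))) *
        z ^ n * skyburst n (ω - 1) (1 / z) := by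
  have h_one_sub : (ascPochhammer ℂ n).eval (1 - (ω : ℂ)) ≠ 0 := by
    intro h
    obtain ⟨k, hk, hkω⟩ := (ascPochhammer_eval_eq_zero_iff n _).mp h
    have : (ω : ℂ) = (k + 1 : ℕ) := by push_cast; linear_combination -hkω
    exact hω' (k + 1) le_add_self hk (by exact_mod_cast this)
  have h_add : ∀ ℓ m : ℕ, (ascPochhammer ℂ m).eval ((ω : ℂ) + ℓ) ≠ 0 := by
    intro ℓ m h
    obtain ⟨k, -, hkω⟩ := (ascPochhammer_eval_eq_zero_iff m _).mp h
    have : (k : ℝ) = -(ω + ℓ) := by exact_mod_cast hkω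
    linarith [k.cast_nonneg (α := ℝ), ℓ.cast_nonneg (α := ℝ)]
  rw [skyburst_eq_sum_antidiagonal, skyburst_eq_sum_antidiagonal, ← Nat.sum_antidiagonal_swap,
    mul_sum]
  refine sum_congr rfl fun ⟨m, ℓ⟩ hp => ?_
  obtain rfl : n = ℓ + m := by rw [HasAntidiagonal.mem_antidiagonal] at hp; omega
  have hpow : z ^ (ℓ + m) * (1 / z) ^ ℓ = z ^ m := by
    rw [one_div, inv_pow, pow_add, mul_right_comm, mul_inv_cancel₀ (pow_ne_zero ℓ hz), one_mul]
  push_cast [Prod.fst_swap, Prod.snd_swap]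
  rw [skyburstCoeff_neg _ ℓ m h_one_sub (h_add ℓ m), ← hpow]
  ring

theorem skyburst_negative_parameter (n : ℕ) (hn : 1 ≤ n) (ω : ℝ) (hω : 0 < ω)
    (hω' : ∀ k : ℕ, 1 ≤ k → k ≤ n → ω ≠ k) (z : ℂ) (hz : z ≠ 0) :
    skyburst n (-ω) z =
      (-1 : ℂ) ^ n *
        ((ascPochhammer ℂ n).eval (ω : ℂ) / (ascPochhammer ℂ n).eval (1 - (ω : ℂ))) *
        z ^ n * skyburst n (ω - 1) (1 / z) :=
  skyburst_negative_parameter_general n ω hω hω' z hz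
end

section
/- Let ω > 0 be a real number and n ∈ ℕ. Then for every z ∈ ℂ, ((ω)_n/n!)·S_n^{ω−1}(z) = ((1+ω)_n/n!)·S_n^ω(z) + (1+z)·Σ_{ℓ=0}^{n−1} (−1)^{n−ℓ} ((1+ω)_ℓ/ℓ!) S_ℓ^ω(z). -/
/-! Normalised by `(1 + ω)_n / n!`, the coefficient of `z^(n-ℓ)` in `S_n^ω(z)` becomes the
product of generalised binomial coefficients `binom(ω, ℓ) * binom(ω + n - ℓ, n - ℓ)`. So the
normalised polynomials are the Taylor coefficients of `G_ω(t) = (1 + t)^ω (1 - z t)^(-ω-1)`, and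
these series satisfy `(1 + t) G_{ω-1} = (1 - z t) G_ω`. Dividing by `1 + t`, i.e. multiplying by
`1 - t + t² - ⋯`, and comparing coefficients of `t^n` gives the recurrence. -/

open Finset Polynomial

section

variable {R : Type*} [CommRing R] [BinomialRing R]

theorem ascPochhammer_eval_neg_eq_choose (r : R) (k : ℕ) :
    (ascPochhammer R k).eval (-r) = (-1) ^ k * k.factorial * Ring.choose r k := by
  rw [← ascPochhammer_smeval_eq_eval, ascPochhammer_smeval_neg_eq_descPochhammer,
    Ring.descPochhammer_eq_factorial_smul_choose, Units.smul_def, ← Int.cast_negOnePow_natCast]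
  simp [zsmul_eq_mul, nsmul_eq_mul, mul_assoc]

theorem ascPochhammer_eval_add_one_eq_choose (r : R) (n : ℕ) :
    (ascPochhammer R n).eval (r + 1) = n.factorial * Ring.choose (r + n) n := by
  rw [← ascPochhammer_smeval_eq_eval, ← Ring.factorial_nsmul_multichoose_eq_ascPochhammer,
    Ring.multichoose_eq, nsmul_eq_mul, add_right_comm, add_sub_cancel_right]

end

namespace PowerSeries

variable {R : Type*} [CommRing R]

theorem coeff_eq_of_one_add_X_mul_eq {g h : R⟦X⟧} {z : R}
    (hgh : (1 + X) * g = (1 - C z * X) * h) (n : ℕ) :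
    coeff n g = coeff n h + (1 + z) * ∑ ℓ ∈ range n, (-1) ^ (n - ℓ) * coeff ℓ h := by
  have hcoeff (m : ℕ) : coeff (m + 1) g + coeff m g = coeff (m + 1) h - z * coeff m h := by
    simpa [add_mul, sub_mul, mul_assoc, coeff_succ_X_mul, add_comm] using
      congrArg (coeff (m + 1)) hgh
  induction n with
  | zero => simpa using congrArg (coeff 0) hgh
  | succ m ih =>
    have hsign : ∑ ℓ ∈ range m, (-1 : R) ^ (m + 1 - ℓ) * coeff ℓ h
        = -∑ ℓ ∈ range m, (-1) ^ (m - ℓ) * coeff ℓ h := by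
      rw [← sum_neg_distrib]
      refine sum_congr rfl fun ℓ hℓ => ?_
      rw [Nat.sub_add_comm (mem_range.mp hℓ).le, pow_succ]
      ring
    rw [sum_range_succ, hsign, Nat.add_sub_cancel_left, pow_one]
    linear_combination hcoeff m - ih

variable [BinomialRing R]

noncomputable def skyburstSeries (σ z : R) : R⟦X⟧ :=
  binomialSeries R σ * rescale (-z) (binomialSeries R (-σ - 1))

theorem one_add_X_mul_skyburstSeries (σ z : R) :
    (1 + X) * skyburstSeries σ z = (1 - C z * X) * skyburstSeries (σ + 1) z := by
  have h1 : binomialSeries R (1 : R) = 1 + X := by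
    simpa using binomialSeries_nat (R := R) (A := R) 1
  have hrescale : rescale (-z) (1 + X) = 1 - C z * X := by
    simp [rescale_X, sub_eq_add_neg]
  rw [skyburstSeries, skyburstSeries, binomialSeries_add, h1, ← hrescale,
    show -σ - 1 = 1 + (-(σ + 1) - 1) by ring, binomialSeries_add, h1, map_mul]
  ring

theorem coeff_rescale_neg_binomialSeries (σ z : R) (b : ℕ) :
    coeff b (rescale (-z) (binomialSeries R (-σ - 1))) = Ring.choose (σ + b) b * z ^ b := by
  rw [coeff_rescale, binomialSeries_coeff, show -σ - 1 = -(σ + 1) by ring, Ring.choose_neg,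
    add_right_comm, add_sub_cancel_right, Units.smul_def, zsmul_eq_mul, Int.cast_negOnePow_natCast,
    smul_eq_mul, mul_one, neg_pow z]
  have hsq : (-1 : R) ^ b * (-1) ^ b = 1 := by rw [← mul_pow]; simp
  linear_combination (Ring.choose (σ + b) b * z ^ b) * hsq

theorem coeff_skyburstSeries_eq_sum (σ z : R) (n : ℕ) :
    coeff n (skyburstSeries σ z) = ∑ ℓ ∈ range (n + 1),
      Ring.choose σ ℓ * Ring.choose (σ + (n - ℓ : ℕ)) (n - ℓ) * z ^ (n - ℓ) := by
  rw [skyburstSeries, coeff_mul, Nat.sum_antidiagonal_eq_sum_range_succ_mk]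
  simp only [coeff_rescale_neg_binomialSeries, binomialSeries_coeff, smul_eq_mul, mul_one,
    mul_assoc]

end PowerSeries

open PowerSeries

theorem ascPochhammer_div_factorial_mul_skyburst_term {K : Type*} [Field K] [CharZero K] (x : K)
    {n ℓ : ℕ} (hℓ : ℓ ≤ n) (hx : (ascPochhammer K ℓ).eval (-(n : K) - x) ≠ 0) :
    (ascPochhammer K n).eval (1 + x) / n.factorial *
        (n.choose ℓ *
          ((ascPochhammer K ℓ).eval (-x) / (ascPochhammer K ℓ).eval (-(n : K) - x)))
      = Ring.choose x ℓ * Ring.choose (x + (n - ℓ : ℕ)) (n - ℓ) := by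
  have hpascal := Ring.choose_smul_choose (x + n) hℓ
  rw [nsmul_eq_mul, show x + n - ℓ = x + (n - ℓ : ℕ) by push_cast [hℓ]; ring] at hpascal
  rw [show -(n : K) - x = -(x + n) by ring, ascPochhammer_eval_neg_eq_choose] at hx ⊢
  rw [ascPochhammer_eval_neg_eq_choose, mul_div_mul_left _ _ (left_ne_zero_of_mul hx),
    add_comm 1 x, ascPochhammer_eval_add_one_eq_choose,
    mul_div_cancel_left₀ _ (Nat.cast_ne_zero.mpr n.factorial_ne_zero)]
  field_simp [right_ne_zero_of_mul hx]
  linear_combination Ring.choose x ℓ * hpascal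

theorem ascPochhammer_eval_neg_natCast_sub_ne_zero {ω : ℝ} (hω : -1 < ω) {ℓ n : ℕ}
    (hℓ : ℓ ≤ n) :
    (ascPochhammer ℂ ℓ).eval (-(n : ℂ) - ω) ≠ 0 := by
  rw [ne_eq, ascPochhammer_eval_eq_zero_iff]
  rintro ⟨k, hk, hkω⟩
  have hre := congrArg Complex.re hkω
  simp only [Complex.natCast_re, neg_sub, Complex.sub_re, Complex.neg_re, Complex.ofReal_re] at hre
  have : (k : ℝ) + 1 ≤ n := by exact_mod_cast hk.trans_le hℓ
  linarith

theorem coeff_skyburstSeries (ω : ℝ) (n : ℕ)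
    (hω : ∀ ℓ ≤ n, (ascPochhammer ℂ ℓ).eval (-(n : ℂ) - ω) ≠ 0) (z : ℂ) :
    coeff n (skyburstSeries (ω : ℂ) z)
      = (ascPochhammer ℂ n).eval (1 + (ω : ℂ)) / n.factorial * skyburst n ω z := by
  rw [coeff_skyburstSeries_eq_sum, skyburst, mul_sum]
  refine sum_congr rfl fun ℓ hℓ => ?_
  have hℓn : ℓ ≤ n := Nat.lt_succ_iff.mp (mem_range.mp hℓ)
  rw [← ascPochhammer_div_factorial_mul_skyburst_term _ hℓn (hω ℓ hℓn)]
  ring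

theorem skyburst_lowering_recurrence (ω : ℝ) (hω : 0 < ω) (n : ℕ) (z : ℂ) :
    ((ascPochhammer ℂ n).eval (ω : ℂ) / (n.factorial : ℂ)) * skyburst n (ω - 1) z =
      ((ascPochhammer ℂ n).eval (1 + (ω : ℂ)) / (n.factorial : ℂ)) * skyburst n ω z +
        (1 + z) *
          ∑ ℓ ∈ Finset.range n,
            (-1 : ℂ) ^ (n - ℓ) *
              ((ascPochhammer ℂ ℓ).eval (1 + (ω : ℂ)) / (ℓ.factorial : ℂ)) *
              skyburst ℓ ω z := by
  have hnorm (m : ℕ) : (ascPochhammer ℂ m).eval (1 + (ω : ℂ)) / m.factorial * skyburst m ω z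
      = coeff m (skyburstSeries (ω : ℂ) z) :=
    (coeff_skyburstSeries ω m
      (fun _ ↦ ascPochhammer_eval_neg_natCast_sub_ne_zero (by linarith)) z).symm
  have hnorm_pred : (ascPochhammer ℂ n).eval (ω : ℂ) / n.factorial * skyburst n (ω - 1) z
      = coeff n (skyburstSeries ((ω : ℂ) - 1) z) := by
    have h := coeff_skyburstSeries (ω - 1) n
      (fun _ ↦ ascPochhammer_eval_neg_natCast_sub_ne_zero (by linarith)) z
    push_cast at h
    rw [add_sub_cancel] at h
    exact h.symm
  rw [hnorm_pred, hnorm]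
  simp_rw [mul_assoc _ _ (skyburst _ ω z), hnorm]
  refine coeff_eq_of_one_add_X_mul_eq ?_ n
  simpa using one_add_X_mul_skyburstSeries ((ω : ℂ) - 1) z
end

section
/- Let n ≥ 1 be an integer and let m be an integer with 0 ≤ m ≤ n−1. Then the polynomial S_n^m has a zero at the origin of multiplicity exactly n−m; that is, S_n^m(z) = z^{n−m}·S_m^n(z) for all z ∈ ℂ, and S_m^n(0) = (n!)²/((n−m)!(n+m)!) ≠ 0. -/
open Finset Polynomial

/-!
For `ω = k` a natural number, `(-k)_ℓ = (-1)^ℓ k(k-1)⋯(k-ℓ+1)` vanishes for `ℓ > k`, and the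
`ℓ`-th coefficient of `S_n^k` becomes `n^{(ℓ)} k^{(ℓ)} / (ℓ! (n+k)^{(ℓ)})` (falling factorials),
which is symmetric in `n` and `k`. Hence for `m ≤ n` the polynomials `S_n^m` and `S_m^n` have the
same nonzero coefficients, only shifted by `z^{n-m}`, and the constant term of `S_m^n` is its
`ℓ = m` coefficient `n^{(m)} m! / (m! (n+m)^{(m)}) = (n!)² / ((n-m)! (n+m)!)`.
-/

noncomputable def skyburstNatCoeff (n k ℓ : ℕ) : ℂ :=
  (n.descFactorial ℓ * k.descFactorial ℓ : ℂ) / (ℓ.factorial * (n + k).descFactorial ℓ)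

theorem skyburstNatCoeff_comm (n k ℓ : ℕ) : skyburstNatCoeff n k ℓ = skyburstNatCoeff k n ℓ := by
  rw [skyburstNatCoeff, skyburstNatCoeff, mul_comm (n.descFactorial ℓ : ℂ), add_comm]

theorem skyburstNatCoeff_of_lt {n k ℓ : ℕ} (h : k < ℓ) : skyburstNatCoeff n k ℓ = 0 := by
  simp [skyburstNatCoeff, Nat.descFactorial_of_lt h]

theorem ascPochhammer_eval_neg_natCast {R : Type*} [Ring R] (k ℓ : ℕ) :
    (ascPochhammer R ℓ).eval (-(k : R)) = (-1) ^ ℓ * (k.descFactorial ℓ : R) := by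
  rw [ascPochhammer_eval_neg_eq_descPochhammer, descPochhammer_eval_eq_descFactorial]

theorem skyburst_natCast (n k : ℕ) (z : ℂ) :
    skyburst n k z = ∑ ℓ ∈ range (n + 1), skyburstNatCoeff n k ℓ * z ^ (n - ℓ) := by
  refine sum_congr rfl fun ℓ hℓ => ?_
  have hden : ((n + k).descFactorial ℓ : ℂ) ≠ 0 :=
    Nat.cast_ne_zero.mpr (Nat.descFactorial_pos.mpr (by simp only [mem_range] at hℓ; omega)).ne'
  have hsign : ((-1 : ℂ) ^ ℓ) ≠ 0 := pow_ne_zero _ (by norm_num)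
  have hfac : (ℓ.factorial : ℂ) ≠ 0 := Nat.cast_ne_zero.mpr ℓ.factorial_ne_zero
  rw [Complex.ofReal_natCast, show -(n : ℂ) - k = -((n + k : ℕ) : ℂ) by push_cast; ring,
    ascPochhammer_eval_neg_natCast, ascPochhammer_eval_neg_natCast, mul_div_mul_left _ _ hsign,
    skyburstNatCoeff, Nat.descFactorial_eq_factorial_mul_choose n ℓ]
  push_cast
  field_simp

theorem skyburst_natCast_eq_pow_mul {m n : ℕ} (hm : m ≤ n) (z : ℂ) :
    skyburst n m z = z ^ (n - m) * skyburst m n z := by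
  rw [skyburst_natCast, skyburst_natCast, mul_sum,
    ← sum_subset (range_subset_range.mpr (by omega : m + 1 ≤ n + 1)) fun ℓ _ hℓ => by
      rw [skyburstNatCoeff_of_lt (by simp only [mem_range] at hℓ; omega), zero_mul]]
  refine sum_congr rfl fun ℓ hℓ => ?_
  simp only [mem_range] at hℓ
  rw [skyburstNatCoeff_comm, mul_left_comm, ← pow_add, show n - m + (m - ℓ) = n - ℓ by omega]

theorem skyburst_natCast_zero (m k : ℕ) : skyburst m k 0 = skyburstNatCoeff m k m := by
  rw [skyburst_natCast, sum_eq_single_of_mem m (self_mem_range_succ m) fun ℓ hℓ hne => by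
    simp only [mem_range] at hℓ
    rw [zero_pow (by omega), mul_zero]]
  simp

theorem skyburstNatCoeff_self {m n : ℕ} (hm : m ≤ n) :
    skyburstNatCoeff m n m = (n.factorial : ℂ) ^ 2 / ((n - m).factorial * (n + m).factorial) := by
  have hn : ((n - m).factorial : ℂ) * n.descFactorial m = n.factorial := by
    exact_mod_cast Nat.factorial_mul_descFactorial hm
  have hnm : (n.factorial : ℂ) * (n + m).descFactorial m = (n + m).factorial := by
    have := Nat.factorial_mul_descFactorial (Nat.le_add_left m n)
    rw [Nat.add_sub_cancel] at this
    exact_mod_cast this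
  have hm_fac : (m.factorial : ℂ) ≠ 0 := Nat.cast_ne_zero.mpr m.factorial_ne_zero
  have hden : ((n + m).descFactorial m : ℂ) ≠ 0 :=
    Nat.cast_ne_zero.mpr (Nat.descFactorial_pos.mpr (Nat.le_add_left m n)).ne'
  rw [skyburstNatCoeff, Nat.descFactorial_self, add_comm m n, mul_div_mul_left _ _ hm_fac,
    div_eq_div_iff hden (by simp [Nat.factorial_ne_zero])]
  linear_combination (-(n.descFactorial m * (n - m).factorial : ℂ)) * hnm +
    (n.factorial * (n + m).descFactorial m : ℂ) * hn

theorem skyburst_zero_at_origin_multiplicity_general (n : ℕ) (m : ℕ) (hm : m ≤ n - 1) :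
    (∀ z : ℂ, skyburst n (m : ℝ) z = z ^ (n - m) * skyburst m (n : ℝ) z) ∧
      skyburst m (n : ℝ) 0 =
        (n.factorial : ℂ) ^ 2 / (((n - m).factorial : ℂ) * ((n + m).factorial : ℂ)) ∧
      skyburst m (n : ℝ) 0 ≠ 0 := by
  have hmn : m ≤ n := by omega
  have hval := (skyburst_natCast_zero m n).trans (skyburstNatCoeff_self hmn)
  refine ⟨skyburst_natCast_eq_pow_mul hmn, hval, ?_⟩
  rw [hval]
  simp [Nat.factorial_ne_zero]

theorem skyburst_zero_at_origin_multiplicity (n : ℕ) (hn : 1 ≤ n) (m : ℕ) (hm : m ≤ n - 1) :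
    (∀ z : ℂ, skyburst n (m : ℝ) z = z ^ (n - m) * skyburst m (n : ℝ) z) ∧
      skyburst m (n : ℝ) 0 =
        (n.factorial : ℂ) ^ 2 / (((n - m).factorial : ℂ) * ((n + m).factorial : ℂ)) ∧
      skyburst m (n : ℝ) 0 ≠ 0 :=
  skyburst_zero_at_origin_multiplicity_general n m hm
end
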